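/- arXiv:1811.01714 — 3 statements merged into one kernel-verified Lean document; each statement's English description precedes it below -/
import Mathlib

section
/- Assume g is three times continuously differentiable and g, g', g'', g''' are bounded on ℝ. Then for every parameter θ = (ω, β, b): M1(θ) = Σ_{k=1}^K ω_k E[g'(⟨β_k, X⟩ + b_k)] β_k; M2(θ)[i,j] = Σ_{k=1}^K ω_k E[g''(⟨β_k, X⟩ + b_k)] β_k[i] β_k[j] for all i,j; and M3(θ)[i,j,l] = Σ_{k=1}^K ω_k E[g'''(⟨β_k, X⟩ + b_k)] β_k[i] β_k[j] β_k[l] for all i,j,l, where X ∼ N(0, I_d). -/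
/- STATEMENT 2: Rewriting of the cross moments (Lemma 1 of the paper, after
Anandkumar et al.): for a smooth bounded link function,
M1(θ) = ∑_k ω_k E[g'(⟨β_k,X⟩+b_k)] β_k, and similarly for M2 (with g'') and
M3 (with g'''), where X ∼ N(0, I_d). -/

open MeasureTheory ProbabilityTheory Real Filter

noncomputable section

/-- The standard Gaussian measure `N(0, I_d)` on `ℝ^d`. -/
def stdGaussian (d : ℕ) : Measure (Fin d → ℝ) :=
  Measure.pi fun _ => gaussianReal 0 1

/-- Euclidean inner product on `ℝ^d`. -/
def dotp {d : ℕ} (u v : Fin d → ℝ) : ℝ := ∑ i, u i * v i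

/-- Kronecker delta. -/
def kron {d : ℕ} (i j : Fin d) : ℝ := if i = j then 1 else 0

/-- `P_θ(Y = 1 ∣ X = x) = ∑ k ω_k g(⟨β_k, x⟩ + b_k)`. -/
def mixP {d K : ℕ} (g : ℝ → ℝ) (ω : Fin K → ℝ) (β : Fin K → Fin d → ℝ)
    (b : Fin K → ℝ) (x : Fin d → ℝ) : ℝ :=
  ∑ k, ω k * g (dotp (β k) x + b k)

/-- `M1(θ)[i] = E_θ[Y X_i]`. -/
def M1 {d K : ℕ} (g : ℝ → ℝ) (ω : Fin K → ℝ) (β : Fin K → Fin d → ℝ)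
    (b : Fin K → ℝ) : Fin d → ℝ :=
  fun i => ∫ x, mixP g ω β b x * x i ∂ stdGaussian d

/-- `M2(θ)[i,j] = E_θ[Y (X_i X_j − δ_{ij})]`. -/
def M2 {d K : ℕ} (g : ℝ → ℝ) (ω : Fin K → ℝ) (β : Fin K → Fin d → ℝ)
    (b : Fin K → ℝ) : Fin d → Fin d → ℝ :=
  fun i j => ∫ x, mixP g ω β b x * (x i * x j - kron i j) ∂ stdGaussian d

/-- `M3(θ)[i,j,l] = E_θ[Y (X_i X_j X_l − X_i δ_{jl} − X_j δ_{il} − X_l δ_{ij})]`. -/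
def M3 {d K : ℕ} (g : ℝ → ℝ) (ω : Fin K → ℝ) (β : Fin K → Fin d → ℝ)
    (b : Fin K → ℝ) : Fin d → Fin d → Fin d → ℝ :=
  fun i j l => ∫ x, mixP g ω β b x *
    (x i * x j * x l - x i * kron j l - x j * kron i l - x l * kron i j) ∂ stdGaussian d

/-- `E[g^{(s)}(⟨β_k, X⟩ + b_k)]` for `X ∼ N(0, I_d)`. -/
def gMom {d : ℕ} (g : ℝ → ℝ) (s : ℕ) (βk : Fin d → ℝ) (bk : ℝ) : ℝ :=
  ∫ x, iteratedDeriv s g (dotp βk x + bk) ∂ stdGaussian d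

/-! Gaussian integration by parts, `E[X_i F(X)] = E[∂_i F(X)]`, applied to
`F(x) = h(⟨β, x⟩ + b) Q(x)` gives `E[h(⟨β, X⟩ + b) (X_i Q - ∂_i Q)] = β_i E[h'(⟨β, X⟩ + b) Q]`.
The tensors `x_i`, `x_i x_j - δ_{ij}` and `x_i x_j x_l - x_i δ_{jl} - x_j δ_{il} - x_l δ_{ij}`
are `x_i Q - ∂_i Q` for `Q = 1`, `x_j` and `x_j x_l - δ_{jl}` respectively, so each moment of a
single ridge function peels off one factor `β_i` and one derivative of `h`, reducing it to the
moment of one order lower. The mixture is linear in its components. All integrands have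
polynomial growth, hence are integrable since Gaussian measures have moments of all orders. -/

def HasPolyGrowth {E : Type*} [Norm E] (f : E → ℝ) : Prop :=
  ∃ C : ℝ, ∃ m : ℕ, ∀ x, ‖f x‖ ≤ C * (1 + ‖x‖) ^ m

namespace HasPolyGrowth

variable {E E' : Type*} [SeminormedAddCommGroup E] [SeminormedAddCommGroup E'] {f g : E → ℝ}

lemma nonneg_of_norm_le {C : ℝ} {m : ℕ} (hf : ∀ x, ‖f x‖ ≤ C * (1 + ‖x‖) ^ m) : 0 ≤ C := by
  simpa using (norm_nonneg _).trans (hf 0)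

lemma of_bounded {C : ℝ} (hf : ∀ x, ‖f x‖ ≤ C) : HasPolyGrowth f :=
  ⟨C, 0, fun x => by simpa using hf x⟩

lemma const (c : ℝ) : HasPolyGrowth fun _ : E => c :=
  of_bounded fun _ => le_rfl

lemma of_norm_le_norm (hf : ∀ x, ‖f x‖ ≤ ‖x‖) : HasPolyGrowth f :=
  ⟨1, 1, fun x => by linarith [hf x]⟩

lemma apply {ι : Type*} [Fintype ι] (i : ι) : HasPolyGrowth fun x : ι → ℝ => x i :=
  of_norm_le_norm fun x => norm_le_pi_norm x i

lemma mul (hf : HasPolyGrowth f) (hg : HasPolyGrowth g) : HasPolyGrowth fun x => f x * g x := by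
  obtain ⟨C, m, hC⟩ := hf
  obtain ⟨D, k, hD⟩ := hg
  refine ⟨C * D, m + k, fun x => ?_⟩
  rw [norm_mul, pow_add, mul_mul_mul_comm]
  exact mul_le_mul (hC x) (hD x) (norm_nonneg _)
    (mul_nonneg (nonneg_of_norm_le hC) (by positivity))

lemma add (hf : HasPolyGrowth f) (hg : HasPolyGrowth g) : HasPolyGrowth fun x => f x + g x := by
  obtain ⟨C, m, hC⟩ := hf
  obtain ⟨D, k, hD⟩ := hg
  refine ⟨C + D, m + k, fun x => ?_⟩
  have h1 : (1 : ℝ) ≤ 1 + ‖x‖ := le_add_of_nonneg_right (norm_nonneg x)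
  calc ‖f x + g x‖ ≤ C * (1 + ‖x‖) ^ m + D * (1 + ‖x‖) ^ k :=
        (norm_add_le _ _).trans (add_le_add (hC x) (hD x))
    _ ≤ C * (1 + ‖x‖) ^ (m + k) + D * (1 + ‖x‖) ^ (m + k) := by
        gcongr ?_ * ?_ + ?_ * ?_
        · exact nonneg_of_norm_le hC
        · exact pow_le_pow_right₀ h1 (by omega)
        · exact nonneg_of_norm_le hD
        · exact pow_le_pow_right₀ h1 (by omega)
    _ = (C + D) * (1 + ‖x‖) ^ (m + k) := by ring

lemma const_mul (c : ℝ) (hf : HasPolyGrowth f) : HasPolyGrowth fun x => c * f x :=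
  (const c).mul hf

lemma sub (hf : HasPolyGrowth f) (hg : HasPolyGrowth g) : HasPolyGrowth fun x => f x - g x := by
  simpa [sub_eq_add_neg] using hf.add (hg.const_mul (-1))

lemma comp {h : E' → ℝ} (hh : HasPolyGrowth h) {a : E → E'} {A : ℝ}
    (ha : ∀ x, ‖a x‖ ≤ A * (1 + ‖x‖)) : HasPolyGrowth fun x => h (a x) := by
  obtain ⟨C, m, hC⟩ := hh
  refine ⟨C * (1 + A) ^ m, m, fun x => ?_⟩
  have hA : 0 ≤ A := by simpa using (norm_nonneg _).trans (ha 0)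
  calc ‖h (a x)‖ ≤ C * (1 + ‖a x‖) ^ m := hC _
    _ ≤ C * ((1 + A) * (1 + ‖x‖)) ^ m := by
        gcongr
        · exact nonneg_of_norm_le hC
        · nlinarith [ha x, norm_nonneg x]
    _ = C * (1 + A) ^ m * (1 + ‖x‖) ^ m := by rw [mul_pow, mul_assoc]

lemma integrable {F : Type*} [NormedAddCommGroup F] [NormedSpace ℝ F] [CompleteSpace F]
    [SecondCountableTopology F] [MeasurableSpace F] [BorelSpace F] {μ : Measure F}
    [IsGaussian μ] {f : F → ℝ} (hf : HasPolyGrowth f) (hfm : AEStronglyMeasurable f μ) :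
    Integrable f μ := by
  obtain ⟨C, m, hC⟩ := hf
  have h1 : MemLp (fun _ : F => (1 : ℝ)) m μ := memLp_const 1
  have h2 : MemLp (fun x : F => ‖x‖) m μ := (IsGaussian.memLp_id μ m (by simp)).norm
  refine (((h1.add h2).integrable_norm_pow').const_mul C).mono' hfm (ae_of_all _ fun x => ?_)
  simpa [abs_of_nonneg (by positivity : (0 : ℝ) ≤ 1 + ‖x‖)] using hC x

end HasPolyGrowth

lemma stdGaussian_eq_map_euclidean (d : ℕ) :
    _root_.stdGaussian d = (ProbabilityTheory.stdGaussian (EuclideanSpace ℝ (Fin d))).map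
      (EuclideanSpace.equiv (Fin d) ℝ).toContinuousLinearMap := by
  rw [← map_pi_eq_stdGaussian, Measure.map_map (by fun_prop) (by fun_prop)]
  exact Measure.map_id.symm

instance isGaussian_stdGaussian_fin (d : ℕ) : IsGaussian (_root_.stdGaussian d) := by
  rw [stdGaussian_eq_map_euclidean]
  infer_instance

lemma measurable_of_hasDerivAt {φ φ' : ℝ → ℝ} (hφ : ∀ t, HasDerivAt φ (φ' t) t) :
    Measurable φ' := by
  rw [show φ' = deriv φ from funext fun t => (hφ t).deriv.symm]
  exact measurable_deriv φ

lemma hasDerivAt_gaussianPDFReal_zero_one (t : ℝ) :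
    HasDerivAt (gaussianPDFReal 0 1) (-t * gaussianPDFReal 0 1 t) t := by
  have hexp : HasDerivAt (fun s : ℝ => -s ^ 2 / 2) (-t) t :=
    ((hasDerivAt_pow 2 t).neg.div_const 2).congr_deriv (by ring)
  have hp : gaussianPDFReal 0 1 = fun s => (√(2 * π))⁻¹ * rexp (-s ^ 2 / 2) := by
    ext s
    simp [gaussianPDFReal]
  rw [hp]
  exact (hexp.exp.const_mul _).congr_deriv (by ring)

lemma integrable_gaussianPDFReal_mul {f : ℝ → ℝ} (hf : Integrable f (gaussianReal 0 1)) :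
    Integrable fun t => gaussianPDFReal 0 1 t * f t := by
  rw [gaussianReal_of_var_ne_zero 0 one_ne_zero,
    integrable_withDensity_iff_integrable_smul' (measurable_gaussianPDF 0 1)
      (ae_of_all _ fun _ => gaussianPDF_lt_top)] at hf
  simpa using hf

theorem integral_mul_gaussianReal_eq_integral_deriv {φ φ' : ℝ → ℝ}
    (hφ : ∀ t, HasDerivAt φ (φ' t) t) (hgφ : HasPolyGrowth φ) (hgφ' : HasPolyGrowth φ') :
    ∫ t, t * φ t ∂gaussianReal 0 1 = ∫ t, φ' t ∂gaussianReal 0 1 := by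
  set p := gaussianPDFReal 0 1
  have hφc : Continuous φ := continuous_iff_continuousAt.2 fun t => (hφ t).continuousAt
  have htφp : Integrable fun t => p t * (t * φ t) :=
    integrable_gaussianPDFReal_mul <|
      ((HasPolyGrowth.of_norm_le_norm fun t => le_rfl).mul hgφ).integrable (by fun_prop)
  have hφ'p : Integrable fun t => p t * φ' t :=
    integrable_gaussianPDFReal_mul <|
      hgφ'.integrable (measurable_of_hasDerivAt hφ).aestronglyMeasurable
  have hφp : Integrable fun t => p t * φ t :=
    integrable_gaussianPDFReal_mul <| hgφ.integrable hφc.aestronglyMeasurable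
  have hparts := integral_mul_deriv_eq_deriv_mul_of_integrable (u := φ) (v := p)
    (fun t _ => hφ t) (fun t _ => hasDerivAt_gaussianPDFReal_zero_one t)
    (htφp.neg.congr (ae_of_all _ fun t => by simp only [Pi.mul_apply, Pi.neg_apply]; ring))
    (hφ'p.congr (ae_of_all _ fun t => by simp only [Pi.mul_apply]; ring))
    (hφp.congr (ae_of_all _ fun t => by simp only [Pi.mul_apply]; ring))
  simp only [integral_gaussianReal_eq_integral_smul one_ne_zero, smul_eq_mul]
  calc ∫ t, p t * (t * φ t) = -∫ t, φ t * (-t * p t) := by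
        rw [← integral_neg]; congr 1 with t; ring
    _ = ∫ t, p t * φ' t := by rw [hparts, neg_neg]; congr 1 with t; ring

lemma integral_stdGaussian_eq_integral_insertNth {n : ℕ} (i : Fin (n + 1))
    {F : (Fin (n + 1) → ℝ) → ℝ} (hF : Integrable F (stdGaussian (n + 1))) :
    ∫ x, F x ∂stdGaussian (n + 1) =
      ∫ y, ∫ t, F (i.insertNth t y) ∂gaussianReal 0 1 ∂stdGaussian n := by
  have hmp := (measurePreserving_piFinSuccAbove (fun _ : Fin (n + 1) => gaussianReal 0 1) i).symm
  unfold _root_.stdGaussian at hF ⊢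
  rw [← hmp.integrable_comp_emb (MeasurableEquiv.measurableEmbedding _)] at hF
  rw [← hmp.integral_comp']
  exact integral_prod_symm _ hF

lemma norm_insertNth_le {n : ℕ} (i : Fin (n + 1)) (t : ℝ) (y : Fin n → ℝ) :
    ‖(i.insertNth t y : Fin (n + 1) → ℝ)‖ ≤ (1 + ‖y‖) * (1 + ‖t‖) := by
  have hsup : ‖(i.insertNth t y : Fin (n + 1) → ℝ)‖ ≤ ‖t‖ + ‖y‖ := by
    refine (pi_norm_le_iff_of_nonneg (by positivity)).2 fun j => ?_
    induction j using i.succAboveCases with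
    | x => simp
    | p k => simpa using (norm_le_pi_norm y k).trans (le_add_of_nonneg_left (norm_nonneg t))
  nlinarith [norm_nonneg t, norm_nonneg y]

theorem integral_coord_mul_eq_integral_partialDeriv {d : ℕ} (i : Fin d)
    {F G : (Fin d → ℝ) → ℝ}
    (hF : ∀ x, HasDerivAt (fun t => F (Function.update x i t)) (G x) (x i))
    (hFm : Measurable F) (hGm : Measurable G) (hgF : HasPolyGrowth F) (hgG : HasPolyGrowth G) :
    ∫ x, x i * F x ∂stdGaussian d = ∫ x, G x ∂stdGaussian d := by
  obtain ⟨n, rfl⟩ : ∃ n, d = n + 1 := ⟨d - 1, by have := i.pos; omega⟩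
  have hslice (y : Fin n → ℝ) (t : ℝ) :
      HasDerivAt (fun s => F (i.insertNth s y)) (G (i.insertNth t y)) t := by
    simpa [Fin.update_insertNth] using hF (i.insertNth t y)
  have hgslice {H : (Fin (n + 1) → ℝ) → ℝ} (hH : HasPolyGrowth H) (y : Fin n → ℝ) :
      HasPolyGrowth fun t => H (i.insertNth t y) :=
    hH.comp (norm_insertNth_le i · y)
  rw [integral_stdGaussian_eq_integral_insertNth i (((HasPolyGrowth.apply i).mul hgF).integrable
      ((measurable_pi_apply i).mul hFm).aestronglyMeasurable),
    integral_stdGaussian_eq_integral_insertNth i (hgG.integrable hGm.aestronglyMeasurable)]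
  congr 1 with y
  simp only [Fin.insertNth_apply_same]
  exact integral_mul_gaussianReal_eq_integral_deriv (hslice y) (hgslice hgF y) (hgslice hgG y)

section Ridge

variable {d : ℕ}

lemma dotp_update (β x : Fin d → ℝ) (i : Fin d) (t : ℝ) :
    dotp β (Function.update x i t) = dotp β x + β i * (t - x i) := by
  simp only [dotp, Pi.update_eq_sub_add_single, Pi.add_apply, Pi.sub_apply, mul_add, mul_sub,
    Finset.sum_add_distrib, Finset.sum_sub_distrib, Pi.single_apply, mul_ite, mul_zero,
    Finset.sum_ite_eq', Finset.mem_univ, if_true]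
  ring

lemma measurable_dotp_add (β : Fin d → ℝ) (b : ℝ) : Measurable fun x => dotp β x + b := by
  unfold dotp
  fun_prop

lemma norm_dotp_add_le (β : Fin d → ℝ) (b : ℝ) (x : Fin d → ℝ) :
    ‖dotp β x + b‖ ≤ (∑ j, |β j| + |b|) * (1 + ‖x‖) := by
  have hdot : |dotp β x| ≤ (∑ j, |β j|) * ‖x‖ := by
    rw [dotp, Finset.sum_mul]
    refine (Finset.abs_sum_le_sum_abs _ _).trans (Finset.sum_le_sum fun j _ => ?_)
    rw [abs_mul]
    exact mul_le_mul_of_nonneg_left (norm_le_pi_norm x j) (abs_nonneg _)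
  have hβ : 0 ≤ ∑ j, |β j| := Finset.sum_nonneg fun j _ => abs_nonneg _
  rw [Real.norm_eq_abs]
  nlinarith [abs_add_le (dotp β x) b, abs_nonneg b, norm_nonneg x]

lemma hasDerivAt_update_apply (x : Fin d → ℝ) (i j : Fin d) :
    HasDerivAt (fun t => Function.update x i t j) (kron i j) (x i) := by
  rcases eq_or_ne i j with rfl | hij
  · simp only [kron, Function.update_self]
    exact hasDerivAt_id' (x i)
  · simp only [kron, if_neg hij, Function.update_of_ne hij.symm]
    exact hasDerivAt_const (x i) (x j)

variable {h h' h'' h''' : ℝ → ℝ} (β : Fin d → ℝ) (b : ℝ)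

lemma hasDerivAt_ridge_update (hh : ∀ t, HasDerivAt h (h' t) t) (x : Fin d → ℝ) (i : Fin d) :
    HasDerivAt (fun t => h (dotp β (Function.update x i t) + b))
      (β i * h' (dotp β x + b)) (x i) := by
  have hlin : HasDerivAt (fun t => dotp β (Function.update x i t) + b) (β i) (x i) := by
    simp only [dotp_update]
    exact ((((hasDerivAt_id' (x i)).sub_const (x i)).const_mul (β i)).const_add _).add_const b
      |>.congr_deriv (mul_one _)
  have hcomp := (hh (dotp β (Function.update x i (x i)) + b)).comp (x i) hlin
  rw [Function.update_eq_self] at hcomp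
  exact hcomp.congr_deriv (mul_comm _ _)

lemma integrable_ridge_mul (hhm : Measurable h) (hgh : HasPolyGrowth h)
    {Q : (Fin d → ℝ) → ℝ} (hQm : Measurable Q) (hgQ : HasPolyGrowth Q) :
    Integrable (fun x => h (dotp β x + b) * Q x) (stdGaussian d) :=
  ((hgh.comp (norm_dotp_add_le β b)).mul hgQ).integrable
    ((hhm.comp (measurable_dotp_add β b)).mul hQm).aestronglyMeasurable

theorem integral_ridge_mul_coord_mul_sub (hh : ∀ t, HasDerivAt h (h' t) t)
    (hgh : HasPolyGrowth h) (hgh' : HasPolyGrowth h') (i : Fin d) {Q Q' : (Fin d → ℝ) → ℝ}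
    (hQ : ∀ x, HasDerivAt (fun t => Q (Function.update x i t)) (Q' x) (x i))
    (hQm : Measurable Q) (hQ'm : Measurable Q') (hgQ : HasPolyGrowth Q)
    (hgQ' : HasPolyGrowth Q') :
    ∫ x, h (dotp β x + b) * (x i * Q x - Q' x) ∂stdGaussian d =
      β i * ∫ x, h' (dotp β x + b) * Q x ∂stdGaussian d := by
  have hhm : Measurable h := (continuous_iff_continuousAt.2 fun t => (hh t).continuousAt).measurable
  have hh'm : Measurable h' := measurable_of_hasDerivAt hh
  have hstein := integral_coord_mul_eq_integral_partialDeriv i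
    (F := fun x => h (dotp β x + b) * Q x)
    (G := fun x => β i * (h' (dotp β x + b) * Q x) + h (dotp β x + b) * Q' x)
    (fun x => by
      have hprod := (hasDerivAt_ridge_update β b hh x i).mul (hQ x)
      simp only [Function.update_eq_self] at hprod
      exact hprod.congr_deriv (by ring))
    ((hhm.comp (measurable_dotp_add β b)).mul hQm)
    ((((hh'm.comp (measurable_dotp_add β b)).mul hQm).const_mul _).add
      ((hhm.comp (measurable_dotp_add β b)).mul hQ'm))
    ((hgh.comp (norm_dotp_add_le β b)).mul hgQ)
    ((((hgh'.comp (norm_dotp_add_le β b)).mul hgQ).const_mul _).add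
      ((hgh.comp (norm_dotp_add_le β b)).mul hgQ'))
  rw [integral_add ((integrable_ridge_mul β b hh'm hgh' hQm hgQ).const_mul _)
    (integrable_ridge_mul β b hhm hgh hQ'm hgQ'), integral_const_mul] at hstein
  simp only [mul_sub]
  rw [integral_sub (integrable_ridge_mul β b hhm hgh (Q := fun x => x i * Q x)
    ((measurable_pi_apply i).mul hQm) ((HasPolyGrowth.apply i).mul hgQ))
    (integrable_ridge_mul β b hhm hgh hQ'm hgQ')]
  simp only [mul_left_comm (h _), hstein]
  ring

theorem integral_ridge_mul_coord (hh : ∀ t, HasDerivAt h (h' t) t)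
    (hgh : HasPolyGrowth h) (hgh' : HasPolyGrowth h') (i : Fin d) :
    ∫ x, h (dotp β x + b) * x i ∂stdGaussian d = β i * ∫ x, h' (dotp β x + b) ∂stdGaussian d := by
  simpa using integral_ridge_mul_coord_mul_sub β b hh hgh hgh' i (Q := fun _ => 1)
    (Q' := fun _ => 0) (fun _ => hasDerivAt_const _ _) measurable_const measurable_const
    (.const 1) (.const 0)

theorem integral_ridge_mul_hermite₂ (hh : ∀ t, HasDerivAt h (h' t) t)
    (hh' : ∀ t, HasDerivAt h' (h'' t) t) (hgh : HasPolyGrowth h) (hgh' : HasPolyGrowth h')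
    (hgh'' : HasPolyGrowth h'') (i j : Fin d) :
    ∫ x, h (dotp β x + b) * (x i * x j - kron i j) ∂stdGaussian d =
      β i * β j * ∫ x, h'' (dotp β x + b) ∂stdGaussian d := by
  rw [integral_ridge_mul_coord_mul_sub β b hh hgh hgh' i (Q := fun x => x j)
    (Q' := fun _ => kron i j) (fun x => hasDerivAt_update_apply x i j) (measurable_pi_apply j)
    measurable_const (.apply j) (.const _), integral_ridge_mul_coord β b hh' hgh' hgh'' j,
    mul_assoc]

theorem integral_ridge_mul_hermite₃ (hh : ∀ t, HasDerivAt h (h' t) t)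
    (hh' : ∀ t, HasDerivAt h' (h'' t) t) (hh'' : ∀ t, HasDerivAt h'' (h''' t) t)
    (hgh : HasPolyGrowth h) (hgh' : HasPolyGrowth h') (hgh'' : HasPolyGrowth h'')
    (hgh''' : HasPolyGrowth h''') (i j l : Fin d) :
    ∫ x, h (dotp β x + b) *
        (x i * x j * x l - x i * kron j l - x j * kron i l - x l * kron i j) ∂stdGaussian d =
      β i * β j * β l * ∫ x, h''' (dotp β x + b) ∂stdGaussian d := by
  have hQ (x : Fin d → ℝ) : HasDerivAt (fun t => Function.update x i t j *
      Function.update x i t l - kron j l) (kron i j * x l + x j * kron i l) (x i) := by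
    have hprod := ((hasDerivAt_update_apply x i j).mul (hasDerivAt_update_apply x i l)).sub_const
      (kron j l)
    simp only [Function.update_eq_self] at hprod
    exact hprod
  have hstein := integral_ridge_mul_coord_mul_sub β b hh hgh hgh' i hQ (by fun_prop)
    (by fun_prop) (((HasPolyGrowth.apply j).mul (.apply l)).sub (.const _))
    (((HasPolyGrowth.const _).mul (.apply l)).add ((HasPolyGrowth.apply j).mul (.const _)))
  rw [integral_ridge_mul_hermite₂ β b hh' hh'' hgh' hgh'' hgh''' j l] at hstein
  refine Eq.trans ?_ (hstein.trans (by ring))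
  congr 1 with x
  ring

end Ridge

lemma ContDiff.hasDerivAt_iteratedDeriv {g : ℝ → ℝ} {n s : ℕ} (hg : ContDiff ℝ n g) (hs : s < n)
    (t : ℝ) : HasDerivAt (iteratedDeriv s g) (iteratedDeriv (s + 1) g t) t := by
  rw [iteratedDeriv_succ]
  exact ((hg.differentiable_iteratedDeriv s (by exact_mod_cast hs)) t).hasDerivAt

lemma integral_mixP_mul {d K : ℕ} {μ : Measure (Fin d → ℝ)} (g : ℝ → ℝ) (ω : Fin K → ℝ)
    (β : Fin K → Fin d → ℝ) (b : Fin K → ℝ) {T : (Fin d → ℝ) → ℝ}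
    (hT : ∀ k, Integrable (fun x => g (dotp (β k) x + b k) * T x) μ) :
    ∫ x, mixP g ω β b x * T x ∂μ = ∑ k, ω k * ∫ x, g (dotp (β k) x + b k) * T x ∂μ := by
  simp only [mixP, Finset.sum_mul, mul_assoc]
  rw [integral_finsetSum _ fun k _ => (hT k).const_mul (ω k)]
  simp only [integral_const_mul]

theorem moments_rewrite_general
    (d K : ℕ) (g : ℝ → ℝ)
    (hg : ContDiff ℝ 3 g)
    (hbdd : ∀ s : ℕ, s ≤ 3 → ∃ C : ℝ, ∀ z : ℝ, |iteratedDeriv s g z| ≤ C)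
    (ω : Fin K → ℝ) (β : Fin K → Fin d → ℝ) (b : Fin K → ℝ) :
    (∀ i, M1 g ω β b i = ∑ k, ω k * gMom g 1 (β k) (b k) * β k i) ∧
    (∀ i j, M2 g ω β b i j = ∑ k, ω k * gMom g 2 (β k) (b k) * β k i * β k j) ∧
    (∀ i j l, M3 g ω β b i j l =
      ∑ k, ω k * gMom g 3 (β k) (b k) * β k i * β k j * β k l) := by
  have hder (s : ℕ) (hs : s < 3) := hg.hasDerivAt_iteratedDeriv hs
  have hgrowth (s : ℕ) (hs : s ≤ 3) : HasPolyGrowth (iteratedDeriv s g) :=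
    let ⟨_, hC⟩ := hbdd s hs; .of_bounded hC
  have hg' : ∀ t, HasDerivAt g (iteratedDeriv 1 g t) t := by simpa using hder 0 (by norm_num)
  have hgg : HasPolyGrowth g := by simpa using hgrowth 0 (by norm_num)
  have hint (k : Fin K) {T : (Fin d → ℝ) → ℝ} (hTm : Measurable T) (hgT : HasPolyGrowth T) :=
    integrable_ridge_mul (β k) (b k) hg.continuous.measurable hgg hTm hgT
  refine ⟨fun i => ?_, fun i j => ?_, fun i j l => ?_⟩
  · rw [M1, integral_mixP_mul g ω β b fun k => hint k (measurable_pi_apply i) (.apply i)]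
    refine Finset.sum_congr rfl fun k _ => ?_
    rw [integral_ridge_mul_coord (β k) (b k) hg' hgg (hgrowth 1 (by norm_num)) i, gMom]
    ring
  · rw [M2, integral_mixP_mul g ω β b fun k => hint k (by fun_prop)
      (((HasPolyGrowth.apply i).mul (.apply j)).sub (.const _))]
    refine Finset.sum_congr rfl fun k _ => ?_
    rw [integral_ridge_mul_hermite₂ (β k) (b k) hg' (hder 1 (by norm_num)) hgg
      (hgrowth 1 (by norm_num)) (hgrowth 2 (by norm_num)) i j, gMom]
    ring
  · rw [M3, integral_mixP_mul g ω β b fun k => hint k (by fun_prop)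
      (((((HasPolyGrowth.apply i).mul (.apply j)).mul (.apply l)).sub
        ((HasPolyGrowth.apply i).mul (.const _))).sub ((HasPolyGrowth.apply j).mul (.const _))
        |>.sub ((HasPolyGrowth.apply l).mul (.const _)))]
    refine Finset.sum_congr rfl fun k _ => ?_
    rw [integral_ridge_mul_hermite₃ (β k) (b k) hg' (hder 1 (by norm_num)) (hder 2 (by norm_num))
      hgg (hgrowth 1 (by norm_num)) (hgrowth 2 (by norm_num)) (hgrowth 3 (by norm_num)) i j l,
      gMom]
    ring

theorem moments_rewrite
    (d K : ℕ) (g : ℝ → ℝ)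
    (hg : ContDiff ℝ 3 g)
    (hbdd : ∀ s : ℕ, s ≤ 3 → ∃ C : ℝ, ∀ z : ℝ, |iteratedDeriv s g z| ≤ C)
    (ω : Fin K → ℝ) (β : Fin K → Fin d → ℝ) (b : Fin K → ℝ)
    (hω : ∀ k, 0 < ω k) (hωsum : ∑ k, ω k = 1) :
    (∀ i, M1 g ω β b i = ∑ k, ω k * gMom g 1 (β k) (b k) * β k i) ∧
    (∀ i j, M2 g ω β b i j = ∑ k, ω k * gMom g 2 (β k) (b k) * β k i * β k j) ∧
    (∀ i j l, M3 g ω β b i j l =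
      ∑ k, ω k * gMom g 3 (β k) (b k) * β k i * β k j * β k l) :=
  moments_rewrite_general d K g hg hbdd ω β b

end
end

section
/- Let g and g̃ both satisfy (S3). Let (ω, β, b) be a parameter with K components and (ω̃, β̃, b̃) a parameter with K̃ components, both with positive weights summing to 1 and nonzero regression vectors, and each satisfying (S2). If Σ_{k=1}^K ω_k g(⟨β_k, x⟩ + b_k) = Σ_{k=1}^{K̃} ω̃_k g̃(⟨β̃_k, x⟩ + b̃_k) for all x ∈ ℝ^d, then K = K̃ and the sets of normalized directions coincide: {μ_1, …, μ_K} = {μ̃_1, …, μ̃_{K̃}}. -/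
/- Along a ray `t ↦ t • u + x` each ridge `g (⟪β, x⟫ + b)` tends to `1` or `0` according to
the sign of `⟪β, u⟫`, and is left unchanged when `β ⟂ u`. Comparing the resulting limits far out
along `±v` shows that the mixture determines `∑_{k : β_k ⟂ u} ω_k sign ⟪β_k, v⟫` for all `u, v`.
Take `u ⟂ β_j` but orthogonal to no `β_k`, `β̃_k` off the line `ℝ β_j`, and `v = β_j`: by (S2)
the left side is `ω_j > 0`, while on the right only the directions `±μ_j` contribute, so `μ_j`
must occur among the `μ̃_k`. Since (S2) makes `k ↦ μ_k` injective, the counts agree. -/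

open Filter Real

noncomputable section

/-- Assumption (S3) on the link function: `g : ℝ → (0,1)` is increasing, has
limit 0 at `−∞` and 1 at `+∞`, and is continuously differentiable with
derivative tending to 0 at `±∞`. -/
def CondS3 (g : ℝ → ℝ) : Prop :=
  (∀ z, g z ∈ Set.Ioo (0 : ℝ) 1) ∧ Monotone g ∧
    Tendsto g atBot (nhds 0) ∧ Tendsto g atTop (nhds 1) ∧
    ContDiff ℝ 1 g ∧
    Tendsto (deriv g) atBot (nhds 0) ∧ Tendsto (deriv g) atTop (nhds 0)

/-- Normalized direction `μ_k = β_k / ‖β_k‖`. -/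
def dir {d K : ℕ} (β : Fin K → EuclideanSpace ℝ (Fin d)) (k : Fin K) :
    EuclideanSpace ℝ (Fin d) := ‖β k‖⁻¹ • β k

/-- Assumption (S2): the normalized directions are pairwise distinct and
pairwise non-opposite. -/
def CondS2 {d K : ℕ} (β : Fin K → EuclideanSpace ℝ (Fin d)) : Prop :=
  ∀ j k : Fin K, j ≠ k → dir β j ≠ dir β k ∧ dir β j ≠ -dir β k

open Topology

section StepLimit

variable {g : ℝ → ℝ}

def stepLimit (g : ℝ → ℝ) (a c : ℝ) : ℝ := if 0 < a then 1 else if a < 0 then 0 else g c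

theorem stepLimit_zero (c : ℝ) : stepLimit g 0 c = g c := by
  simp [stepLimit]

theorem stepLimit_of_ne_zero {a : ℝ} (ha : a ≠ 0) (c c' : ℝ) :
    stepLimit g a c = stepLimit g a c' := by
  rcases ha.lt_or_gt with h | h <;> simp [stepLimit, h, h.not_gt]

theorem stepLimit_sub_stepLimit_neg (s c : ℝ) :
    stepLimit g s c - stepLimit g (-s) c = Real.sign s := by
  rcases lt_trichotomy s 0 with h | rfl | h
  · simp [stepLimit, h, h.not_gt, Real.sign_of_neg h]
  · simp [stepLimit]
  · simp [stepLimit, h, h.not_gt, Real.sign_of_pos h]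

variable (h0 : Tendsto g atBot (𝓝 0)) (h1 : Tendsto g atTop (𝓝 1))
include h0 h1

theorem tendsto_stepLimit (a c : ℝ) :
    Tendsto (fun t => g (t * a + c)) atTop (𝓝 (stepLimit g a c)) := by
  rcases lt_trichotomy a 0 with h | rfl | h
  · rw [show stepLimit g a c = 0 by simp [stepLimit, h, h.not_gt]]
    exact h0.comp (tendsto_atBot_add_const_right _ c (tendsto_id.atTop_mul_const_of_neg h))
  · simp [stepLimit_zero]
  · rw [show stepLimit g a c = 1 by simp [stepLimit, h]]
    exact h1.comp (tendsto_atTop_add_const_right _ c (tendsto_id.atTop_mul_const h))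

theorem tendsto_stepLimit_sub (a s c : ℝ) :
    Tendsto (fun r => stepLimit g a (r * s + c) - stepLimit g a (r * -s + c)) atTop
      (𝓝 (if a = 0 then Real.sign s else 0)) := by
  by_cases ha : a = 0
  · subst ha
    simpa [stepLimit_zero, stepLimit_sub_stepLimit_neg] using
      (tendsto_stepLimit h0 h1 s c).sub (tendsto_stepLimit h0 h1 (-s) c)
  · simp [ha, stepLimit_of_ne_zero ha _ c]

end StepLimit

section RidgeSum

open RealInnerProductSpace

variable {E ι κ : Type*} [NormedAddCommGroup E] [InnerProductSpace ℝ E]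
  [Fintype ι] [Fintype κ]

def ridgeSum (g : ℝ → ℝ) (ω : ι → ℝ) (β : ι → E) (b : ι → ℝ) (x : E) : ℝ :=
  ∑ k, ω k * g (⟪β k, x⟫ + b k)

def ridgeSumRayLimit (g : ℝ → ℝ) (ω : ι → ℝ) (β : ι → E) (b : ι → ℝ) (u x : E) : ℝ :=
  ∑ k, ω k * stepLimit g ⟪β k, u⟫ (⟪β k, x⟫ + b k)

variable {g g' : ℝ → ℝ} {ω : ι → ℝ} {β : ι → E} {b : ι → ℝ}
  {ω' : κ → ℝ} {β' : κ → E} {b' : κ → ℝ}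

theorem tendsto_ridgeSum_ray (h0 : Tendsto g atBot (𝓝 0)) (h1 : Tendsto g atTop (𝓝 1))
    (u x : E) :
    Tendsto (fun t : ℝ => ridgeSum g ω β b (t • u + x)) atTop
      (𝓝 (ridgeSumRayLimit g ω β b u x)) := by
  refine tendsto_finsetSum _ fun k _ => ?_
  simp only [inner_add_right, real_inner_smul_right, add_assoc]
  exact (tendsto_stepLimit h0 h1 _ _).const_mul _

theorem tendsto_ridgeSumRayLimit_sub (h0 : Tendsto g atBot (𝓝 0))
    (h1 : Tendsto g atTop (𝓝 1)) (u v : E) :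
    Tendsto (fun r : ℝ =>
        ridgeSumRayLimit g ω β b u (r • v) - ridgeSumRayLimit g ω β b u (r • -v))
      atTop (𝓝 (∑ k with ⟪β k, u⟫ = 0, ω k * Real.sign ⟪β k, v⟫)) := by
  simp only [ridgeSumRayLimit, ← Finset.sum_sub_distrib, ← mul_sub, Finset.sum_filter,
    ← mul_ite_zero]
  refine tendsto_finsetSum _ fun k _ => ?_
  simp only [real_inner_smul_right, inner_neg_right]
  exact (tendsto_stepLimit_sub h0 h1 _ _ _).const_mul _

theorem sum_inner_eq_zero_mul_sign_eq_of_ridgeSum_eq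
    (h0 : Tendsto g atBot (𝓝 0)) (h1 : Tendsto g atTop (𝓝 1))
    (h0' : Tendsto g' atBot (𝓝 0)) (h1' : Tendsto g' atTop (𝓝 1))
    (heq : ridgeSum g ω β b = ridgeSum g' ω' β' b') (u v : E) :
    ∑ k with ⟪β k, u⟫ = 0, ω k * Real.sign ⟪β k, v⟫
      = ∑ k with ⟪β' k, u⟫ = 0, ω' k * Real.sign ⟪β' k, v⟫ := by
  have hray : ridgeSumRayLimit g ω β b u = ridgeSumRayLimit g' ω' β' b' u :=
    funext fun x => tendsto_nhds_unique (tendsto_ridgeSum_ray h0 h1 u x)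
      (heq ▸ tendsto_ridgeSum_ray h0' h1' u x)
  exact tendsto_nhds_unique (tendsto_ridgeSumRayLimit_sub h0 h1 u v)
    (hray ▸ tendsto_ridgeSumRayLimit_sub h0' h1' u v)

end RidgeSum

section Geometry

open RealInnerProductSpace

variable {E : Type*} [NormedAddCommGroup E] [InnerProductSpace ℝ E]

theorem exists_inner_eq_zero_forall_mem_span_of_inner_eq_zero {ι : Type*} [Finite ι]
    (μ : E) (v : ι → E) : ∃ u, ⟪μ, u⟫ = 0 ∧ ∀ i, ⟪v i, u⟫ = 0 → v i ∈ ℝ ∙ μ := by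
  set W := (ℝ ∙ μ)ᗮ
  let p : {i // v i ∉ ℝ ∙ μ} → Submodule ℝ W := fun i =>
    LinearMap.ker ((innerₛₗ ℝ (v i)).comp W.subtype)
  have hp : ∀ i, p i ≠ ⊤ := by
    rintro ⟨i, hi⟩ htop
    apply hi
    rw [← Submodule.orthogonal_orthogonal (ℝ ∙ μ), Submodule.mem_orthogonal]
    intro w hw
    rw [real_inner_comm]
    have hw_ker : (⟨w, hw⟩ : W) ∈ p ⟨i, hi⟩ := htop ▸ Submodule.mem_top
    exact hw_ker
  -- `W` is not a finite union of proper subspaces.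
  obtain ⟨w, hw⟩ : ∃ w : W, ∀ i, w ∉ p i := by
    by_contra! h
    obtain ⟨i, hi⟩ := Subspace.exists_eq_top_of_iUnion_eq_univ
      (Set.eq_univ_of_forall fun w => Set.mem_iUnion.2 (h w))
    exact hp i hi
  refine ⟨w, Submodule.mem_orthogonal_singleton_iff_inner_right.1 w.2, fun i hi => ?_⟩
  by_contra hni
  exact hw ⟨i, hni⟩ hi

theorem inv_norm_smul_eq_sign_inner_smul_of_mem_span_singleton {x y : E} (h : y ∈ ℝ ∙ x) :
    ‖y‖⁻¹ • y = Real.sign ⟪y, x⟫ • (‖x‖⁻¹ • x) := by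
  obtain ⟨c, rfl⟩ := Submodule.mem_span_singleton.1 h
  rcases eq_or_ne x 0 with rfl | hx
  · simp
  have hx2 : 0 < ‖x‖ ^ 2 := by positivity
  rw [real_inner_smul_left, real_inner_self_eq_norm_sq, norm_smul, smul_smul, smul_smul]
  congr 1
  rcases lt_trichotomy c 0 with hc | rfl | hc
  · rw [Real.sign_of_neg (mul_neg_of_neg_of_pos hc hx2), Real.norm_of_nonpos hc.le]
    field_simp [hc.ne]
  · simp
  · rw [Real.sign_of_pos (mul_pos hc hx2), Real.norm_of_nonneg hc.le]
    field_simp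

end Geometry

section Directions

open RealInnerProductSpace

variable {d K K' : ℕ}

theorem CondS2.dir_injective {β : Fin K → EuclideanSpace ℝ (Fin d)} (h : CondS2 β) :
    Function.Injective (dir β) :=
  fun j k hjk => by_contra fun hne => (h j k hne).1 hjk

theorem exists_dir_eq_of_ridgeSum_eq {g g' : ℝ → ℝ}
    {ω : Fin K → ℝ} {β : Fin K → EuclideanSpace ℝ (Fin d)} {b : Fin K → ℝ}
    {ω' : Fin K' → ℝ} {β' : Fin K' → EuclideanSpace ℝ (Fin d)} {b' : Fin K' → ℝ}
    (h0 : Tendsto g atBot (𝓝 0)) (h1 : Tendsto g atTop (𝓝 1))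
    (h0' : Tendsto g' atBot (𝓝 0)) (h1' : Tendsto g' atTop (𝓝 1))
    (hω : ∀ k, 0 < ω k) (hω' : ∀ k, 0 < ω' k) (hβ : ∀ k, β k ≠ 0) (hS2 : CondS2 β)
    (heq : ridgeSum g ω β b = ridgeSum g' ω' β' b') (j : Fin K) :
    ∃ k, dir β' k = dir β j := by
  by_contra! hne
  obtain ⟨u, hu, hspan⟩ :=
    exists_inner_eq_zero_forall_mem_span_of_inner_eq_zero (β j) (Sum.elim β β')
  have hleft : ∑ k with ⟪β k, u⟫ = 0, ω k * Real.sign ⟪β k, β j⟫ = ω j := by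
    have hβj : 0 < ‖β j‖ := norm_pos_iff.2 (hβ j)
    rw [Finset.sum_eq_single_of_mem j (by simpa [real_inner_comm] using hu),
      real_inner_self_eq_norm_sq, Real.sign_of_pos (by positivity), mul_one]
    intro k hk hkj
    have hdir : dir β k = Real.sign ⟪β k, β j⟫ • dir β j :=
      inv_norm_smul_eq_sign_inner_smul_of_mem_span_singleton
        (hspan (.inl k) (Finset.mem_filter.1 hk).2)
    rcases Real.sign_apply_eq ⟪β k, β j⟫ with hs | hs | hs <;> rw [hs] at hdir
    · exact absurd (by simpa using hdir) (hS2 k j hkj).2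
    · simp [dir, hβ k] at hdir
    · exact absurd (by simpa using hdir) (hS2 k j hkj).1
  have hright : ∑ k with ⟪β' k, u⟫ = 0, ω' k * Real.sign ⟪β' k, β j⟫ ≤ 0 := by
    refine Finset.sum_nonpos fun k hk => ?_
    have hdir : dir β' k = Real.sign ⟪β' k, β j⟫ • dir β j :=
      inv_norm_smul_eq_sign_inner_smul_of_mem_span_singleton
        (hspan (.inr k) (Finset.mem_filter.1 hk).2)
    rcases Real.sign_apply_eq ⟪β' k, β j⟫ with hs | hs | hs <;> rw [hs] at hdir ⊢
    · linarith [hω' k]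
    · simp
    · exact absurd (by simpa using hdir) (hne k)
  have hsign := sum_inner_eq_zero_mul_sign_eq_of_ridgeSum_eq h0 h1 h0' h1' heq u (β j)
  linarith [hω j]

end Directions

open RealInnerProductSpace in
theorem directions_identifiable_general
    (d : ℕ) (g g' : ℝ → ℝ) (hg : CondS3 g) (hg' : CondS3 g')
    (K K' : ℕ)
    (ω : Fin K → ℝ) (β : Fin K → EuclideanSpace ℝ (Fin d)) (b : Fin K → ℝ)
    (ω' : Fin K' → ℝ) (β' : Fin K' → EuclideanSpace ℝ (Fin d)) (b' : Fin K' → ℝ)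
    (hω : ∀ k, 0 < ω k) (hβ : ∀ k, β k ≠ 0)
    (hω' : ∀ k, 0 < ω' k) (hβ' : ∀ k, β' k ≠ 0)
    (hS2 : CondS2 β) (hS2' : CondS2 β')
    (heq : ∀ x : EuclideanSpace ℝ (Fin d),
      ∑ k, ω k * g (⟪β k, x⟫ + b k) = ∑ k, ω' k * g' (⟪β' k, x⟫ + b' k)) :
    K = K' ∧ Set.range (dir β) = Set.range (dir β') := by
  obtain ⟨-, -, hg0, hg1, -⟩ := hg
  obtain ⟨-, -, hg'0, hg'1, -⟩ := hg'
  have hridge : ridgeSum g ω β b = ridgeSum g' ω' β' b' := funext heq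
  have hrange : Set.range (dir β) = Set.range (dir β') := Set.Subset.antisymm
    (Set.range_subset_iff.2 <|
      exists_dir_eq_of_ridgeSum_eq hg0 hg1 hg'0 hg'1 hω hω' hβ hS2 hridge)
    (Set.range_subset_iff.2 <|
      exists_dir_eq_of_ridgeSum_eq hg'0 hg'1 hg0 hg1 hω' hω hβ' hS2' hridge.symm)
  refine ⟨?_, hrange⟩
  calc K = Nat.card (Set.range (dir β)) := by
        rw [Nat.card_range_of_injective hS2.dir_injective, Nat.card_fin]
    _ = Nat.card (Set.range (dir β')) := by rw [hrange]
    _ = K' := by rw [Nat.card_range_of_injective hS2'.dir_injective, Nat.card_fin]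

open RealInnerProductSpace in
theorem directions_identifiable
    (d : ℕ) (hd : 1 ≤ d) (g g' : ℝ → ℝ) (hg : CondS3 g) (hg' : CondS3 g')
    (K K' : ℕ) (hK : 1 ≤ K) (hK' : 1 ≤ K')
    (ω : Fin K → ℝ) (β : Fin K → EuclideanSpace ℝ (Fin d)) (b : Fin K → ℝ)
    (ω' : Fin K' → ℝ) (β' : Fin K' → EuclideanSpace ℝ (Fin d)) (b' : Fin K' → ℝ)
    (hω : ∀ k, 0 < ω k) (hωsum : ∑ k, ω k = 1) (hβ : ∀ k, β k ≠ 0)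
    (hω' : ∀ k, 0 < ω' k) (hωsum' : ∑ k, ω' k = 1) (hβ' : ∀ k, β' k ≠ 0)
    (hS2 : CondS2 β) (hS2' : CondS2 β')
    (heq : ∀ x : EuclideanSpace ℝ (Fin d),
      ∑ k, ω k * g (⟪β k, x⟫ + b k) = ∑ k, ω' k * g' (⟪β' k, x⟫ + b' k)) :
    K = K' ∧ Set.range (dir β) = Set.range (dir β') :=
  directions_identifiable_general d g g' hg hg' K K' ω β b ω' β' b' hω hβ hω' hβ' hS2 hS2' heq

end
end

section
/- Let g satisfy (S3). Let β_1, …, β_K ∈ ℝ^d be nonzero vectors whose normalized directions μ_k = β_k/‖β_k‖ satisfy (S2), and let b_1, …, b_K ∈ ℝ. If α_1, …, α_K ∈ ℝ are such that Σ_{k=1}^K α_k g(⟨β_k, x⟩ + b_k) = 0 for all x ∈ ℝ^d, then α_k = 0 for every k; that is, the functions x ↦ g(⟨β_k, x⟩ + b_k), k = 1, …, K, are linearly independent. -/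
/- STATEMENT 17: Under (S2) and (S3), the functions x ↦ g(⟨β_k, x⟩ + b_k),
k = 1, …, K, are linearly independent. -/

open Filter Real

noncomputable section

/-!
Fix `j`. Since `β_j` is not parallel to any other `β_k`, there is a direction `v ⊥ β_j` with
`⟪β_k, v⟫ ≠ 0` for every `k ≠ j` (a real vector space is not a finite union of proper
subspaces). Along `x + t • v`, `t → ∞`, every term `k ≠ j` of the vanishing sum tends to a
constant independent of `x`, while the term `j` does not move. Hence `α_j g(⟪β_j, x⟫ + b_j)`
does not depend on `x`; letting `⟪β_j, x⟫ → ±∞` gives `α_j · 1 = α_j · 0`.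
-/

open Topology RealInnerProductSpace

section RayLimits

variable {g : ℝ → ℝ} {lo hi c : ℝ}

lemma tendsto_comp_mul_add_atTop_of_pos (hhi : Tendsto g atTop (𝓝 hi)) (hc : 0 < c) (e : ℝ) :
    Tendsto (fun t => g (t * c + e)) atTop (𝓝 hi) :=
  hhi.comp (tendsto_atTop_add_const_right _ e (tendsto_id.atTop_mul_const hc))

lemma tendsto_comp_mul_add_atTop_of_neg (hlo : Tendsto g atBot (𝓝 lo)) (hc : c < 0) (e : ℝ) :
    Tendsto (fun t => g (t * c + e)) atTop (𝓝 lo) :=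
  hlo.comp (tendsto_atBot_add_const_right _ e (tendsto_id.atTop_mul_const_of_neg hc))

lemma tendsto_comp_mul_add_atTop (hlo : Tendsto g atBot (𝓝 lo)) (hhi : Tendsto g atTop (𝓝 hi))
    (c e : ℝ) :
    Tendsto (fun t => g (t * c + e)) atTop
      (𝓝 (if c = 0 then g e else if 0 < c then hi else lo)) := by
  rcases lt_trichotomy c 0 with hc | rfl | hc
  · simpa [hc.ne, hc.not_gt] using tendsto_comp_mul_add_atTop_of_neg hlo hc e
  · simp
  · simpa [hc.ne', hc] using tendsto_comp_mul_add_atTop_of_pos hhi hc e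

end RayLimits

section InnerProductSpace

variable {E : Type*} [NormedAddCommGroup E] [InnerProductSpace ℝ E]

lemma inv_norm_smul_eq_or_eq_neg_of_mem_span_singleton {x y : E} (hy : y ≠ 0)
    (h : y ∈ ℝ ∙ x) : ‖x‖⁻¹ • x = ‖y‖⁻¹ • y ∨ ‖x‖⁻¹ • x = -(‖y‖⁻¹ • y) := by
  obtain ⟨c, rfl⟩ := Submodule.mem_span_singleton.mp h
  have hc : c ≠ 0 := by rintro rfl; simp at hy
  have hx : ‖x‖ ≠ 0 := by rw [norm_ne_zero_iff]; rintro rfl; simp at hy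
  rw [norm_smul, Real.norm_eq_abs, smul_smul]
  rcases hc.lt_or_gt with hc | hc
  · right
    rw [abs_of_neg hc, ← neg_smul]
    congr 1
    field_simp
  · left
    rw [abs_of_pos hc]
    congr 1
    field_simp

lemma exists_mem_orthogonal_singleton_inner_ne {x y : E} (hy : y ≠ 0)
    (h₁ : ‖x‖⁻¹ • x ≠ ‖y‖⁻¹ • y) (h₂ : ‖x‖⁻¹ • x ≠ -(‖y‖⁻¹ • y)) :
    ∃ w ∈ (ℝ ∙ x)ᗮ, ⟪y, w⟫ ≠ 0 := by
  by_contra! hyw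
  have hy_mem : y ∈ (ℝ ∙ x)ᗮᗮ := fun w hw => by rw [real_inner_comm]; exact hyw w hw
  rw [Submodule.orthogonal_orthogonal] at hy_mem
  rcases inv_norm_smul_eq_or_eq_neg_of_mem_span_singleton hy hy_mem with h | h
  exacts [h₁ h, h₂ h]

variable {ι : Type*} [Fintype ι] {g : ℝ → ℝ} {lo hi : ℝ}

lemma tendsto_sum_mul_comp_inner_add_smul (hlo : Tendsto g atBot (𝓝 lo))
    (hhi : Tendsto g atTop (𝓝 hi)) (α b : ι → ℝ) (β : ι → E) (x v : E) :
    Tendsto (fun t : ℝ => ∑ k, α k * g (⟪β k, x + t • v⟫ + b k)) atTop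
      (𝓝 (∑ k, α k * if ⟪β k, v⟫ = 0 then g (⟪β k, x⟫ + b k)
        else if 0 < ⟪β k, v⟫ then hi else lo)) := by
  refine tendsto_finsetSum _ fun k _ => Tendsto.const_mul _ ?_
  refine (tendsto_comp_mul_add_atTop hlo hhi ⟪β k, v⟫ (⟪β k, x⟫ + b k)).congr fun t => ?_
  rw [inner_add_right, real_inner_smul_right]
  ring_nf

lemma eq_zero_of_sum_mul_comp_inner_add_eq_zero (hlo : Tendsto g atBot (𝓝 lo))
    (hhi : Tendsto g atTop (𝓝 hi)) (hne : lo ≠ hi) {α b : ι → ℝ} {β : ι → E} {j : ι}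
    (hβj : β j ≠ 0) {v : E} (hvj : ⟪β j, v⟫ = 0) (hv : ∀ k, k ≠ j → ⟪β k, v⟫ ≠ 0)
    (hzero : ∀ x, ∑ k, α k * g (⟪β k, x⟫ + b k) = 0) : α j = 0 := by
  have hlim (x : E) := tendsto_nhds_unique
    (tendsto_sum_mul_comp_inner_add_smul hlo hhi α b β x v)
    (by simp only [hzero]; exact tendsto_const_nhds)
  have hconst (x : E) : α j * g (⟪β j, x⟫ + b j) = α j * g (b j) := by
    have := (hlim x).trans (hlim 0).symm
    rw [← sub_eq_zero, ← Finset.sum_sub_distrib,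
      Finset.sum_eq_single j (fun k _ hk => by simp [hv k hk]) (by simp),
      if_pos hvj, if_pos hvj, inner_zero_right, zero_add, sub_eq_zero] at this
    exact this
  have hc : 0 < ⟪β j, β j⟫ := real_inner_self_pos.mpr hβj
  have hhi_eq : α j * hi = α j * g (b j) := tendsto_nhds_unique
    ((tendsto_comp_mul_add_atTop_of_pos hhi hc (b j)).const_mul (α j))
    (tendsto_const_nhds.congr fun t => by rw [← hconst (t • β j), real_inner_smul_right])
  have hlo_eq : α j * lo = α j * g (b j) := tendsto_nhds_unique
    ((tendsto_comp_mul_add_atTop_of_neg hlo (neg_neg_of_pos hc) (b j)).const_mul (α j))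
    (tendsto_const_nhds.congr fun t => by
      rw [← hconst (t • -β j), real_inner_smul_right, inner_neg_right])
  exact (mul_eq_mul_left_iff.mp (hlo_eq.trans hhi_eq.symm)).resolve_left hne

end InnerProductSpace

open RealInnerProductSpace in
theorem component_functions_linearly_independent_general
    (d K : ℕ)
    (g : ℝ → ℝ) (hg : CondS3 g)
    (β : Fin K → EuclideanSpace ℝ (Fin d)) (hβ : ∀ k, β k ≠ 0)
    (hS2 : CondS2 β) (b : Fin K → ℝ)
    (α : Fin K → ℝ)
    (hzero : ∀ x : EuclideanSpace ℝ (Fin d), ∑ k, α k * g (⟪β k, x⟫ + b k) = 0) :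
    ∀ k, α k = 0 := by
  intro j
  have hperp (k : {k // k ≠ j}) : ∃ w ∈ (ℝ ∙ β j)ᗮ, innerₗ _ (β k) w ≠ 0 := by
    obtain ⟨h₁, h₂⟩ := hS2 j k k.2.symm
    simpa using exists_mem_orthogonal_singleton_inner_ne (hβ k) h₁ h₂
  obtain ⟨v, hvj, hv⟩ := Module.Dual.exists_forall_mem_ne_zero_of_forall_exists _ _ hperp
  exact eq_zero_of_sum_mul_comp_inner_add_eq_zero hg.2.2.1 hg.2.2.2.1 zero_ne_one (hβ j)
    (Submodule.mem_orthogonal_singleton_iff_inner_right.mp hvj)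
    (fun k hk => by simpa using hv ⟨k, hk⟩) hzero

open RealInnerProductSpace in
theorem component_functions_linearly_independent
    (d K : ℕ) (hd : 1 ≤ d) (hK : 1 ≤ K)
    (g : ℝ → ℝ) (hg : CondS3 g)
    (β : Fin K → EuclideanSpace ℝ (Fin d)) (hβ : ∀ k, β k ≠ 0)
    (hS2 : CondS2 β) (b : Fin K → ℝ)
    (α : Fin K → ℝ)
    (hzero : ∀ x : EuclideanSpace ℝ (Fin d), ∑ k, α k * g (⟪β k, x⟫ + b k) = 0) :
    ∀ k, α k = 0 :=
  component_functions_linearly_independent_general d K g hg β hβ hS2 b α hzero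

end
end
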